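/- arXiv:2410.08110 — 5 statements merged into one kernel-verified Lean document; each statement's English description precedes it below -/
import Mathlib

section
/- Fix d_s ≥ σ_w². There exists k₀ > 0 such that for all integers k > k₀ and all t satisfying 2ζ/√k ≤ t ≤ 1, every θ ≥ 0 with θ ≤ d_s − σ_w² − δ_s(t,k) satisfies θ + σ_w² ≤ d_s − √((4σ_w²θ + σ_{w²}²)/k) · Q⁻¹(t − ζ/√k). -/
open MeasureTheory ProbabilityTheory

/-- The standard Gaussian complementary CDF `Q(x) = γ((x,∞))`. -/
noncomputable def gaussQ (x : ℝ) : ℝ := ((gaussianReal 0 1) (Set.Ioi x)).toReal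

/-- The inverse of the standard Gaussian complementary CDF on `(0,1)`. -/
noncomputable def gaussQinv : ℝ → ℝ := Function.invFun gaussQ

/-! Nothing about `Q⁻¹` is needed: the inequality holds for every value `q` of
`Q⁻¹(t − ζ/√k)`. With `g θ = √((4σ_w²θ + σ_{w²}²)/k)`, monotone and nonnegative, and
`D = d_s − σ_w²`, the hypothesis reads `θ ≤ D − g D · q` and the claim `θ ≤ D − g θ · q`.
If `q ≥ 0` the hypothesis forces `θ ≤ D`, so `g θ · q ≤ g D · q`; if `q < 0` either
`θ ≤ D` and `g θ · q ≤ 0`, or `θ > D` and again `g θ · q ≤ g D · q`. -/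

theorem Monotone.le_sub_apply_mul_of_le_sub_apply_mul {α : Type*} [CommRing α] [LinearOrder α]
    [IsStrictOrderedRing α] {g : α → α} (hg : Monotone g) (hg_nonneg : ∀ x, 0 ≤ g x)
    {θ D q : α} (h : θ ≤ D - g D * q) : θ ≤ D - g θ * q := by
  rcases le_or_gt 0 q with hq | hq
  · have hθD : θ ≤ D := h.trans (sub_le_self _ (mul_nonneg (hg_nonneg D) hq))
    linarith [mul_le_mul_of_nonneg_right (hg hθD) hq]
  · rcases le_or_gt θ D with hθD | hDθ
    · linarith [mul_nonpos_of_nonneg_of_nonpos (hg_nonneg θ) hq.le]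
    · linarith [mul_le_mul_of_nonpos_right (hg hDθ.le) hq.le]

theorem monotone_sqrt_affine_div {c e k : ℝ} (hc : 0 ≤ c) (hk : 0 ≤ k) :
    Monotone fun θ => Real.sqrt ((c * θ + e) / k) := fun _ _ hxy =>
  Real.sqrt_le_sqrt (by gcongr)

theorem stmt_2_general (σw σw2 ζ ds : ℝ) :
    ∃ k₀ : ℕ, 0 < k₀ ∧ ∀ k : ℕ, k₀ < k → ∀ t : ℝ,
      2 * ζ / Real.sqrt k ≤ t → t ≤ 1 → ∀ θ : ℝ, 0 ≤ θ →
      θ ≤ ds - σw ^ 2 -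
          Real.sqrt ((4 * σw ^ 2 * (ds - σw ^ 2) + σw2 ^ 2) / k) *
            gaussQinv (t - ζ / Real.sqrt k) →
      θ + σw ^ 2 ≤ ds -
          Real.sqrt ((4 * σw ^ 2 * θ + σw2 ^ 2) / k) * gaussQinv (t - ζ / Real.sqrt k) := by
  refine ⟨1, one_pos, fun k _ t _ _ θ _ h => ?_⟩
  have key := (monotone_sqrt_affine_div (e := σw2 ^ 2) (by positivity : 0 ≤ 4 * σw ^ 2)
    k.cast_nonneg).le_sub_apply_mul_of_le_sub_apply_mul (fun _ => Real.sqrt_nonneg _) h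
  linarith

/-- Lemma 1 of the paper: Fix `d_s ≥ σ_w²`. There exists `k₀ > 0` such that for
all integers `k > k₀` and all `t` with `2ζ/√k ≤ t ≤ 1`, every `θ ≥ 0` with
`θ ≤ d_s − σ_w² − δ_s(t,k)` satisfies
`θ + σ_w² ≤ d_s − √((4σ_w²θ + σ_{w²}²)/k) · Q⁻¹(t − ζ/√k)`,
where `δ_s(t,k) = √(V₁/k)·Q⁻¹(t − ζ/√k)` and `V₁ = 4σ_w²(d_s − σ_w²) + σ_{w²}²`. -/
theorem stmt_2 (σw σw2 ζ ds : ℝ) (hσw : 0 < σw) (hσw2 : 0 < σw2) (hζ : 0 < ζ)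
    (hds : σw ^ 2 ≤ ds) :
    ∃ k₀ : ℕ, 0 < k₀ ∧ ∀ k : ℕ, k₀ < k → ∀ t : ℝ,
      2 * ζ / Real.sqrt k ≤ t → t ≤ 1 → ∀ θ : ℝ, 0 ≤ θ →
      θ ≤ ds - σw ^ 2 -
          Real.sqrt ((4 * σw ^ 2 * (ds - σw ^ 2) + σw2 ^ 2) / k) *
            gaussQinv (t - ζ / Real.sqrt k) →
      θ + σw ^ 2 ≤ ds -
          Real.sqrt ((4 * σw ^ 2 * θ + σw2 ^ 2) / k) * gaussQinv (t - ζ / Real.sqrt k) :=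
  stmt_2_general σw σw2 ζ ds
end

section
/- Let σ_w > 0, σ_{w²} > 0, D ≥ 0, k > 0 and q be real numbers, and set V₁ := 4σ_w²·D + σ_{w²}². Then for every θ ≥ 0 with θ ≤ D − q·√(V₁/k), it holds that θ + q·√((4σ_w²·θ + σ_{w²}²)/k) ≤ D. -/
/-! With the nonnegative, monotone map `g(x) = √((4σ_w²·x + σ_{w²}²)/k)`, the hypothesis reads
`θ + q·g(D) ≤ D` and the claim `θ + q·g(θ) ≤ D`. If `q ≥ 0` the hypothesis forces `θ ≤ D`, so
`q·g(θ) ≤ q·g(D)`; if `q ≤ 0`, either `θ ≤ D` and `q·g(θ) ≤ 0`, or `θ ≥ D` and again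
`q·g(θ) ≤ q·g(D)`. -/

theorem add_mul_le_of_le_sub_mul {α : Type*} [Ring α] [LinearOrder α] [IsOrderedRing α]
    {g : α → α} (hg : Monotone g) (hg₀ : ∀ x, 0 ≤ g x) {θ D q : α}
    (h : θ ≤ D - q * g D) : θ + q * g θ ≤ D := by
  have h' : θ + q * g D ≤ D := le_sub_iff_add_le.mp h
  rcases le_total 0 q with hq | hq
  · have hθD : θ ≤ D := (le_add_of_nonneg_right (mul_nonneg hq (hg₀ D))).trans h'
    exact (add_le_add_right (mul_le_mul_of_nonneg_left (hg hθD) hq) θ).trans h'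
  · rcases le_total θ D with hθD | hDθ
    · exact (add_le_of_nonpos_right (mul_nonpos_of_nonpos_of_nonneg hq (hg₀ θ))).trans hθD
    · exact (add_le_add_right (mul_le_mul_of_nonpos_left (hg hDθ) hq) θ).trans h'

theorem Real.monotone_sqrt_affine_div {a b k : ℝ} (ha : 0 ≤ a) (hk : 0 ≤ k) :
    Monotone fun x => √((a * x + b) / k) := fun _ _ hxy =>
  Real.sqrt_le_sqrt <| div_le_div_of_nonneg_right (by gcongr) hk

theorem stmt_3_general (σw σw2 D k q : ℝ) (hk : 0 < k)
    (θ : ℝ)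
    (hθ : θ ≤ D - q * Real.sqrt ((4 * σw ^ 2 * D + σw2 ^ 2) / k)) :
    θ + q * Real.sqrt ((4 * σw ^ 2 * θ + σw2 ^ 2) / k) ≤ D :=
  add_mul_le_of_le_sub_mul (Real.monotone_sqrt_affine_div (by positivity) hk.le)
    (fun _ => Real.sqrt_nonneg _) hθ

/-- core inequality of Lemma 1. With `V₁ := 4σ_w²·D + σ_{w²}²`, for every
`θ ≥ 0` with `θ ≤ D − q·√(V₁/k)`, it holds that `θ + q·√((4σ_w²·θ + σ_{w²}²)/k) ≤ D`. -/
theorem stmt_3 (σw σw2 D k q : ℝ) (hσw : 0 < σw) (hσw2 : 0 < σw2) (hD : 0 ≤ D) (hk : 0 < k)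
    (θ : ℝ) (hθ0 : 0 ≤ θ)
    (hθ : θ ≤ D - q * Real.sqrt ((4 * σw ^ 2 * D + σw2 ^ 2) / k)) :
    θ + q * Real.sqrt ((4 * σw ^ 2 * θ + σw2 ^ 2) / k) ≤ D :=
  stmt_3_general σw σw2 D k q hk θ hθ
end

section
/- For every probability measure P_Z on 𝒵 there exist a measurable encoder f : 𝒳 → {1,…,M} and a decoder g : {1,…,M} → 𝒵 such that the excess-distortion probability satisfies ∫_𝒳 π(x, g(f(x))) dP_X(x) ≤ ∫₀¹ ∫_𝒳 (P_Z({z : π(x,z) > t}))^M dP_X(x) dt. -/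
/-!
Random coding: draw a codebook `c : Fin M → 𝒵` with i.i.d. `P_Z` entries and encode `x` by a
codeword minimising `π(x, ·)`. For fixed `x` the cost `minᵢ π(x, cᵢ)` exceeds `t` exactly when
every codeword does, which has probability `P_Z{π(x, ·) > t}^M`; the layer-cake formula and
Fubini turn this into the right-hand side as the average cost over codebooks, and some codebook
does at least as well as the average. Choosing the least minimising index keeps the encoder
measurable.
-/

open MeasureTheory ProbabilityTheory Set

theorem lt_ciInf_iff_of_finite {ι α : Type*} [Finite ι] [Nonempty ι]
    [ConditionallyCompleteLinearOrder α] {f : ι → α} {a : α} :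
    a < ⨅ i, f i ↔ ∀ i, a < f i := by
  refine ⟨fun h i => h.trans_le (ciInf_le (Finite.bddBelow_range f) i), fun h => ?_⟩
  obtain ⟨i, hi⟩ := exists_eq_ciInf_of_finite (f := f)
  exact hi ▸ h i

theorem ciInf_mem_of_forall_mem {ι α : Type*} [Finite ι] [Nonempty ι]
    [ConditionallyCompleteLinearOrder α] {f : ι → α} {s : Set α} (h : ∀ i, f i ∈ s) :
    ⨅ i, f i ∈ s := by
  obtain ⟨i, hi⟩ := exists_eq_ciInf_of_finite (f := f)
  exact hi ▸ h i

theorem MeasureTheory.Integrable.of_measurable_of_mem_unitInterval {α : Type*}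
    [MeasurableSpace α] {μ : Measure α} [IsFiniteMeasure μ] {f : α → ℝ} (hf : Measurable f)
    (h : ∀ a, f a ∈ unitInterval) : Integrable f μ :=
  .of_bound hf.aestronglyMeasurable 1 <| ae_of_all _ fun a => by
    rw [Real.norm_of_nonneg (h a).1]
    exact (h a).2

theorem ProbabilityTheory.Kernel.measurable_apply_preimage_prodMk_right {α β γ : Type*}
    [MeasurableSpace α] [MeasurableSpace β] [MeasurableSpace γ] (κ : Kernel α β) [IsSFiniteKernel κ]
    {t : Set (β × γ)} (ht : MeasurableSet t) :
    Measurable fun p : α × γ => κ p.1 ((fun b => (b, p.2)) ⁻¹' t) :=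
  Kernel.measurable_kernel_prodMk_left (κ := Kernel.prodMkRight γ κ)
    (t := {q | (q.2, q.1.2) ∈ t}) ((measurable_snd.prodMk measurable_fst.snd) ht)

theorem exists_measurable_argmin {α ι : Type*} [MeasurableSpace α] [MeasurableSpace ι]
    [Fintype ι] [Nonempty ι] [LinearOrder ι] {F : ι → α → ℝ} (hF : ∀ i, Measurable (F i)) :
    ∃ f : α → ι, Measurable f ∧ ∀ x j, F (f x) x ≤ F j x := by
  classical
  let S : α → Finset ι := fun x => {i | ∀ j, F i x ≤ F j x}
  have hS (x : α) : (S x).Nonempty := by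
    obtain ⟨i, -, hi⟩ := Finset.univ.exists_min_image (F · x) Finset.univ_nonempty
    exact ⟨i, by simpa [S] using fun j => hi j (Finset.mem_univ j)⟩
  have hmem (i : ι) : MeasurableSet {x | i ∈ S x} := by
    simpa [S, Set.ofPred_forall] using
      MeasurableSet.iInter fun j => measurableSet_le (hF i) (hF j)
  refine ⟨fun x => (S x).min' (hS x), measurable_to_countable' fun i => ?_, fun x => ?_⟩
  · simp only [Set.preimage, Set.mem_singleton_iff, Finset.min'_eq_iff, Set.ofPred_and,
      Set.ofPred_forall, imp_iff_not_or, Set.ofPred_or]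
    exact (hmem i).inter (.iInter fun b => (hmem b).compl.union (.const _))
  · simpa [S] using (S x).min'_mem (hS x)

theorem integral_iInf_pi_eq_integral_Ioo_pow {ι 𝒵 : Type*} [MeasurableSpace 𝒵] [Fintype ι]
    [Nonempty ι] (μ : Measure 𝒵) [IsFiniteMeasure μ] {φ : 𝒵 → ℝ} (hφ : Measurable φ)
    (hφ01 : ∀ z, φ z ∈ unitInterval) :
    ∫ c, ⨅ i, φ (c i) ∂Measure.pi (fun _ : ι => μ)
      = ∫ t in Ioo 0 1, (μ {z | t < φ z}).toReal ^ Fintype.card ι := by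
  have hmin01 (c : ι → 𝒵) : ⨅ i, φ (c i) ∈ unitInterval :=
    ciInf_mem_of_forall_mem fun i => hφ01 (c i)
  have hint : Integrable (fun c : ι → 𝒵 => ⨅ i, φ (c i)) (Measure.pi fun _ => μ) :=
    .of_measurable_of_mem_unitInterval (.iInf fun i => hφ.comp (measurable_pi_apply i)) hmin01
  have hlevel (t : ℝ) :
      {c : ι → 𝒵 | t < ⨅ i, φ (c i)} = Set.pi univ fun _ => {z | t < φ z} := by
    ext c
    simp [lt_ciInf_iff_of_finite]
  rw [hint.integral_eq_integral_meas_lt (ae_of_all _ fun c => (hmin01 c).1),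
    setIntegral_eq_of_subset_of_forall_sdiff_eq_zero measurableSet_Ioi Ioo_subset_Ioi_self]
  · refine setIntegral_congr_fun measurableSet_Ioo fun t _ => ?_
    simp [Measure.real, hlevel, Measure.pi_pi]
  · rintro t ⟨ht0, ht⟩
    have : {c : ι → 𝒵 | t < ⨅ i, φ (c i)} = ∅ :=
      eq_empty_of_forall_notMem fun c hc => by
        simp only [mem_Ioo, not_and, not_lt] at ht
        exact (ht ht0).not_gt (hc.trans_le (hmin01 c).2)
    simp [this]

theorem exists_encoder_integral_le_integral_Ioo_pow {𝒳 𝒵 : Type*} [MeasurableSpace 𝒳]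
    [MeasurableSpace 𝒵] (P_X : Measure 𝒳) [IsFiniteMeasure P_X] (P_Z : Measure 𝒵)
    [IsProbabilityMeasure P_Z] {π : 𝒳 → 𝒵 → ℝ} (hπ : Measurable (Function.uncurry π))
    (hπ01 : ∀ x z, π x z ∈ unitInterval) (M : ℕ) [NeZero M] :
    ∃ f : 𝒳 → Fin M, ∃ g : Fin M → 𝒵, Measurable f ∧
      ∫ x, π x (g (f x)) ∂P_X ≤ ∫ t in Ioo 0 1, ∫ x, (P_Z {z | t < π x z}).toReal ^ M ∂P_X := by
  let ν := Measure.pi fun _ : Fin M => P_Z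
  let cost : (Fin M → 𝒵) × 𝒳 → ℝ := fun p => ⨅ i, π p.2 (p.1 i)
  have hcost : Integrable cost (ν.prod P_X) :=
    .of_measurable_of_mem_unitInterval
      (.iInf fun i => hπ.comp (measurable_snd.prodMk ((measurable_pi_apply i).comp measurable_fst)))
      fun p => ciInf_mem_of_forall_mem fun i => hπ01 _ _
  have htail_meas : Measurable fun p : 𝒳 × ℝ => P_Z {z | p.2 < π p.1 z} :=
    measurable_measure_prodMk_left (s := {q : (𝒳 × ℝ) × 𝒵 | q.1.2 < π q.1.1 q.2})
      (measurableSet_lt measurable_fst.snd (hπ.comp (measurable_fst.fst.prodMk measurable_snd)))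
  have htail : Integrable (fun p : 𝒳 × ℝ => (P_Z {z | p.2 < π p.1 z}).toReal ^ M)
      (P_X.prod (volume.restrict (Ioo 0 1))) :=
    .of_measurable_of_mem_unitInterval (htail_meas.ennreal_toReal.pow_const M) fun p =>
      ⟨by positivity, pow_le_one₀ ENNReal.toReal_nonneg measureReal_le_one⟩
  have havg : ∫ c, ∫ x, cost (c, x) ∂P_X ∂ν
      = ∫ t in Ioo 0 1, ∫ x, (P_Z {z | t < π x z}).toReal ^ M ∂P_X := by
    refine (integral_integral_swap hcost).trans <| .trans ?_ (integral_integral_swap htail)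
    refine integral_congr_ae (ae_of_all _ fun x => ?_)
    simpa using integral_iInf_pi_eq_integral_Ioo_pow (ι := Fin M) P_Z
      (hπ.comp (measurable_const.prodMk measurable_id)) (hπ01 x)
  obtain ⟨c, hc⟩ := exists_le_integral hcost.integral_prod_left
  obtain ⟨f, hf, hmin⟩ := exists_measurable_argmin (F := fun i x => π x (c i))
    fun i => hπ.comp (measurable_id.prodMk measurable_const)
  have hf_cost (x : 𝒳) : π x (c (f x)) = cost (c, x) :=
    le_antisymm (le_ciInf (hmin x)) (ciInf_le (Finite.bddBelow_range _) (f x))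
  refine ⟨f, c, hf, ?_⟩
  simpa only [hf_cost] using hc.trans havg.le

/-- random-coding achievability bound, Lemma 4 of the paper: for every
probability measure `P_Z` on `𝒵` there exist a measurable encoder `f : 𝒳 → {1,…,M}` and a
decoder `g : {1,…,M} → 𝒵` with
`∫ π(x, g(f(x))) dP_X ≤ ∫₀¹ ∫ (P_Z{z : π(x,z) > t})^M dP_X dt`, where
`π(x,z) := κ(x)({s : d(s,z) > D})`. -/
theorem stmt_5 {𝒳 𝒮 𝒵 : Type*} [MeasurableSpace 𝒳] [MeasurableSpace 𝒮] [MeasurableSpace 𝒵]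
    (P_X : Measure 𝒳) [IsProbabilityMeasure P_X]
    (κ : Kernel 𝒳 𝒮) [IsMarkovKernel κ]
    (d : 𝒮 × 𝒵 → ℝ) (hd : Measurable d) (D : ℝ) (M : ℕ) (hM : 1 ≤ M)
    (P_Z : Measure 𝒵) [IsProbabilityMeasure P_Z] :
    ∃ f : 𝒳 → Fin M, ∃ g : Fin M → 𝒵, Measurable f ∧
      ∫ x, ((κ x) {s | d (s, g (f x)) > D}).toReal ∂P_X
        ≤ ∫ t in Set.Ioo (0 : ℝ) 1,
            ∫ x, (P_Z {z | ((κ x) {s | d (s, z) > D}).toReal > t}).toReal ^ M ∂P_X := by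
  have : NeZero M := ⟨by omega⟩
  have hπ : Measurable (Function.uncurry fun x z => (κ x {s | d (s, z) > D}).toReal) :=
    (κ.measurable_apply_preimage_prodMk_right
      (measurableSet_lt measurable_const hd)).ennreal_toReal
  exact exists_encoder_integral_le_integral_Ioo_pow P_X P_Z hπ
    (fun x z => ⟨ENNReal.toReal_nonneg, measureReal_le_one⟩) M
end

section
/- For every probability measure P_{ZY} on 𝒵 × 𝒴 there exist a measurable encoder f : 𝒳 → {1,…,M} and decoders g_s : {1,…,M} → 𝒵, g_x : {1,…,M} → 𝒴 such that the joint excess-distortion probability satisfies ∫_𝒳 π(x, g_s(f(x)), g_x(f(x))) dP_X(x) ≤ ∫₀¹ ∫_𝒳 (P_{ZY}({(z,y) : π(x,z,y) > t}))^M dP_X(x) dt. -/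
open MeasureTheory ProbabilityTheory

/-- The conditional joint excess-distortion probability:
`π(x,z,y) = κ(x)({s : d_s(s,z) > D_s})` if `d_x(x,y) ≤ D_x`, and `1` otherwise. -/
noncomputable def piXZY {𝒳 𝒮 𝒵 𝒴 : Type*} [MeasurableSpace 𝒳] [MeasurableSpace 𝒮]
    (κ : ProbabilityTheory.Kernel 𝒳 𝒮) (ds : 𝒮 × 𝒵 → ℝ) (dx : 𝒳 × 𝒴 → ℝ) (Ds Dx : ℝ)
    (x : 𝒳) (z : 𝒵) (y : 𝒴) : ℝ :=
  if dx (x, y) ≤ Dx then ((κ x) {s | ds (s, z) > Ds}).toReal else 1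

section Aux

variable {M : ℕ} [NeZero M]

lemma argminFin_ne (v : Fin M → ℝ) :
    (Finset.univ.filter fun i => ∀ j, v i ≤ v j).Nonempty := by
  obtain ⟨i, _, hi⟩ := Finset.exists_min_image Finset.univ v ⟨default, Finset.mem_univ _⟩
  exact ⟨i, Finset.mem_filter.2 ⟨Finset.mem_univ _, fun j => hi j (Finset.mem_univ _)⟩⟩

noncomputable def argminFin (v : Fin M → ℝ) : Fin M :=
  (Finset.univ.filter fun i => ∀ j, v i ≤ v j).min' (argminFin_ne v)

lemma argminFin_le (v : Fin M → ℝ) (j : Fin M) : v (argminFin v) ≤ v j := by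
  have h := Finset.min'_mem (Finset.univ.filter fun i => ∀ j, v i ≤ v j) (argminFin_ne v)
  exact (Finset.mem_filter.1 h).2 j

lemma argminFin_eq_iff (v : Fin M → ℝ) (i : Fin M) :
    argminFin v = i ↔ (∀ j, v i ≤ v j) ∧ ∀ k, (∀ j, v k ≤ v j) → i ≤ k := by
  constructor
  · rintro rfl
    refine ⟨argminFin_le v, fun k hk => Finset.min'_le _ _ ?_⟩
    exact Finset.mem_filter.2 ⟨Finset.mem_univ _, hk⟩
  · rintro ⟨h1, h2⟩
    refine le_antisymm (Finset.min'_le _ _ (Finset.mem_filter.2 ⟨Finset.mem_univ _, h1⟩)) ?_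
    refine Finset.le_min' _ _ _ fun k hk => h2 k (Finset.mem_filter.1 hk).2

lemma measurable_argminFin {𝒳 : Type*} [MeasurableSpace 𝒳] {v : 𝒳 → Fin M → ℝ}
    (hv : ∀ i, Measurable fun x => v x i) : Measurable fun x => argminFin (v x) := by
  apply measurable_to_countable'
  intro i
  have heq : (fun x => argminFin (v x)) ⁻¹' {i} =
      (⋂ j, {x | v x i ≤ v x j}) ∩ ⋂ k, {x | (∀ j, v x k ≤ v x j) → i ≤ k} := by
    ext x
    simp only [Set.mem_preimage, Set.mem_singleton_iff, argminFin_eq_iff, Set.mem_inter_iff,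
      Set.mem_setOf_eq, Set.mem_iInter]
  rw [heq]
  refine MeasurableSet.inter (MeasurableSet.iInter fun j => measurableSet_le (hv i) (hv j))
    (MeasurableSet.iInter fun k => ?_)
  by_cases h : i ≤ k
  · simp only [h, imp_true_iff]; exact MeasurableSet.univ
  · have : {x | (∀ j, v x k ≤ v x j) → i ≤ k} = (⋂ j, {x | v x k ≤ v x j})ᶜ := by
      ext x; simp [h]
    rw [this]
    exact (MeasurableSet.iInter fun j => measurableSet_le (hv k) (hv j)).compl

lemma measurable_finset_inf' {ι α : Type*} [MeasurableSpace α] (s : Finset ι) (hs : s.Nonempty)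
    (g : ι → α → ℝ) (hg : ∀ i, Measurable (g i)) :
    Measurable fun x => s.inf' hs fun i => g i x := by
  induction hs using Finset.Nonempty.cons_induction with
  | singleton i => simp only [Finset.inf'_singleton]; exact hg i
  | cons i s hi hs ih =>
    have hrw : (fun x => (Finset.cons i s hi).inf' (Finset.cons_nonempty hi) fun j => g j x)
        = fun x => (g i x) ⊓ (s.inf' hs fun j => g j x) := by
      funext x; exact Finset.inf'_cons (H := hs) (f := fun j => g j x)
    rw [hrw]
    exact (hg i).min ih

end Aux

section PiProps

variable {𝒳 𝒮 𝒵 𝒴 : Type*} [MeasurableSpace 𝒳] [MeasurableSpace 𝒮] [MeasurableSpace 𝒵]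
    [MeasurableSpace 𝒴]

omit [MeasurableSpace 𝒵] [MeasurableSpace 𝒴] in
lemma piXZY_nonneg (κ : Kernel 𝒳 𝒮) (ds : 𝒮 × 𝒵 → ℝ) (dx : 𝒳 × 𝒴 → ℝ) (Ds Dx : ℝ)
    (x : 𝒳) (z : 𝒵) (y : 𝒴) : 0 ≤ piXZY κ ds dx Ds Dx x z y := by
  unfold piXZY; split <;> simp [ENNReal.toReal_nonneg]

omit [MeasurableSpace 𝒵] [MeasurableSpace 𝒴] in
lemma piXZY_le_one (κ : Kernel 𝒳 𝒮) [IsMarkovKernel κ] (ds : 𝒮 × 𝒵 → ℝ) (dx : 𝒳 × 𝒴 → ℝ)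
    (Ds Dx : ℝ) (x : 𝒳) (z : 𝒵) (y : 𝒴) : piXZY κ ds dx Ds Dx x z y ≤ 1 := by
  unfold piXZY; split
  · exact ENNReal.toReal_le_of_le_ofReal zero_le_one (by simpa using prob_le_one)
  · exact le_refl 1

lemma measurable_piXZY (κ : Kernel 𝒳 𝒮) [IsMarkovKernel κ] {ds : 𝒮 × 𝒵 → ℝ}
    (hds : Measurable ds) {dx : 𝒳 × 𝒴 → ℝ} (hdx : Measurable dx) (Ds Dx : ℝ) :
    Measurable fun q : 𝒳 × 𝒵 × 𝒴 => piXZY κ ds dx Ds Dx q.1 q.2.1 q.2.2 := by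
  have h1 : Measurable fun q : 𝒳 × 𝒵 × 𝒴 => ((κ q.1) {s | ds (s, q.2.1) > Ds}).toReal := by
    refine Measurable.ennreal_toReal ?_
    have ht : MeasurableSet {p : (𝒳 × 𝒵 × 𝒴) × 𝒮 | ds (p.2, p.1.2.1) > Ds} :=
      measurableSet_lt measurable_const (hds.comp (measurable_snd.prodMk
        (measurable_fst.comp (measurable_snd.comp measurable_fst))))
    exact ProbabilityTheory.Kernel.measurable_kernel_prodMk_left
      (κ := κ.comap Prod.fst measurable_fst) ht
  have h2 : MeasurableSet {q : 𝒳 × 𝒵 × 𝒴 | dx (q.1, q.2.2) ≤ Dx} :=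
    measurableSet_le (hdx.comp (measurable_fst.prodMk (measurable_snd.comp measurable_snd)))
      measurable_const
  exact Measurable.ite h2 h1 measurable_const

end PiProps

lemma stmt6_aux {𝒳 𝒲 : Type*} [MeasurableSpace 𝒳] [MeasurableSpace 𝒲]
    (P_X : Measure 𝒳) [IsProbabilityMeasure P_X]
    (μ : Measure 𝒲) [IsProbabilityMeasure μ] (M : ℕ) (hM : 1 ≤ M)
    (q : 𝒳 → 𝒲 → ℝ) (hqm : Measurable fun a : 𝒳 × 𝒲 => q a.1 a.2)
    (hq0 : ∀ x r, 0 ≤ q x r) (hq1 : ∀ x r, q x r ≤ 1) :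
    ∃ c : Fin M → 𝒲, ∃ f : 𝒳 → Fin M, Measurable f ∧
      ∫ x, q x (c (f x)) ∂P_X
        ≤ ∫ t in Set.Ioo (0 : ℝ) 1, ∫ x, (μ {r | q x r > t}).toReal ^ M ∂P_X := by
  haveI : NeZero M := ⟨by omega⟩
  set ν : Measure (Fin M → 𝒲) := Measure.pi fun _ => μ with hν
  haveI : IsProbabilityMeasure ν := by rw [hν]; infer_instance
  have hne : (Finset.univ : Finset (Fin M)).Nonempty := Finset.univ_nonempty
  set F : (Fin M → 𝒲) → 𝒳 → ℝ := fun c x => Finset.univ.inf' hne fun i => q x (c i) with hF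
  have hFm : Measurable fun a : (Fin M → 𝒲) × 𝒳 => F a.1 a.2 := by
    refine measurable_finset_inf' Finset.univ hne
      (fun i (a : (Fin M → 𝒲) × 𝒳) => q a.2 (a.1 i)) fun i => ?_
    exact hqm.comp (measurable_snd.prodMk ((measurable_pi_apply i).comp measurable_fst))
  have hF0 : ∀ c x, 0 ≤ F c x := fun c x =>
    Finset.le_inf' hne _ fun i _ => hq0 x (c i)
  have hF1 : ∀ c x, F c x ≤ 1 := fun c x =>
    (Finset.inf'_le _ (Finset.mem_univ ⟨0, by omega⟩)).trans (hq1 x _)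
  have hWm : Measurable fun a : ℝ × 𝒳 => (μ {r | q a.2 r > a.1}).toReal ^ M := by
    refine Measurable.pow_const (Measurable.ennreal_toReal ?_) M
    have ht : MeasurableSet {a : (ℝ × 𝒳) × 𝒲 | q a.1.2 a.2 > a.1.1} :=
      measurableSet_lt (measurable_fst.comp measurable_fst)
        (hqm.comp ((measurable_snd.comp measurable_fst).prodMk measurable_snd))
    exact ProbabilityTheory.Kernel.measurable_kernel_prodMk_left
      (κ := Kernel.const (ℝ × 𝒳) μ) ht
  have hW0 : ∀ t (x : 𝒳), 0 ≤ (μ {r | q x r > t}).toReal ^ M :=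
    fun t x => pow_nonneg ENNReal.toReal_nonneg M
  have hW1 : ∀ t (x : 𝒳), (μ {r | q x r > t}).toReal ^ M ≤ 1 := by
    intro t x
    refine pow_le_one₀ ENNReal.toReal_nonneg ?_
    exact ENNReal.toReal_le_of_le_ofReal zero_le_one (by simpa using prob_le_one)
  haveI : IsFiniteMeasure (volume.restrict (Set.Ioo (0:ℝ) 1)) := by
    constructor
    simp [Real.volume_Ioo]
  -- Step A: layer cake per x
  have keyA : ∀ x : 𝒳, ∫ c, F c x ∂ν
      = ∫ t in Set.Ioo (0:ℝ) 1, (μ {r | q x r > t}).toReal ^ M := by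
    intro x
    have hGm : Measurable fun c => F c x := hFm.comp (measurable_id.prodMk measurable_const)
    have hGint : Integrable (fun c => F c x) ν := by
      refine Integrable.mono' (integrable_const 1) hGm.aestronglyMeasurable ?_
      exact ae_of_all _ fun c => by
        rw [Real.norm_eq_abs, abs_le]; exact ⟨by linarith [hF0 c x], hF1 c x⟩
    rw [Integrable.integral_eq_integral_meas_lt hGint (ae_of_all _ fun c => hF0 c x)]
    have hcong : ∀ t : ℝ, (ν {c | t < F c x}).toReal = (μ {r | q x r > t}).toReal ^ M := by
      intro t
      have hset : {c : Fin M → 𝒲 | t < F c x}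
          = Set.pi Set.univ fun _ : Fin M => {r | q x r > t} := by
        ext c
        simp only [Set.mem_setOf_eq, hF, Finset.lt_inf'_iff, Set.mem_pi, Set.mem_univ,
          Finset.mem_univ, gt_iff_lt, true_implies]
      rw [hset, hν, Measure.pi_pi]
      simp [Finset.prod_const, ENNReal.toReal_pow]
    simp only [measureReal_def, hcong]
    have hzero : ∀ t ∈ Set.Ici (1:ℝ), (μ {r | q x r > t}).toReal ^ M = 0 := by
      intro t ht
      have hempty : {r | q x r > t} = ∅ := by
        ext r; simp only [Set.mem_setOf_eq, Set.mem_empty_iff_false, iff_false, not_lt]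
        exact (hq1 x r).trans ht
      rw [hempty]
      simp [zero_pow (by omega : M ≠ 0)]
    have hanti : Antitone fun t : ℝ => μ {r | q x r > t} :=
      fun a b hab => measure_mono fun r hr => lt_of_le_of_lt hab hr
    have hgm : Measurable fun t : ℝ => (μ {r | q x r > t}).toReal ^ M :=
      (hanti.measurable.ennreal_toReal).pow_const M
    have hbd : ∀ t : ℝ, ‖(μ {r | q x r > t}).toReal ^ M‖ ≤ 1 := fun t => by
      rw [Real.norm_eq_abs, abs_le]; exact ⟨by linarith [hW0 t x], hW1 t x⟩
    have hint1 : IntegrableOn (fun t : ℝ => (μ {r | q x r > t}).toReal ^ M)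
        (Set.Ioo (0:ℝ) 1) volume := by
      refine Integrable.mono' (integrable_const 1) hgm.aestronglyMeasurable.restrict ?_
      exact ae_of_all _ hbd
    have hint2 : IntegrableOn (fun t : ℝ => (μ {r | q x r > t}).toReal ^ M)
        (Set.Ici (1:ℝ)) volume := by
      rw [integrableOn_congr_fun hzero measurableSet_Ici]
      exact integrableOn_zero
    rw [← Set.Ioo_union_Ici_eq_Ioi (zero_lt_one (α := ℝ)),
      setIntegral_union (by rw [Set.disjoint_left]; exact fun t ht ht' => ht.2.not_ge ht')
        measurableSet_Ici hint1 hint2,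
      setIntegral_eq_zero_of_forall_eq_zero hzero, add_zero]
  -- joint integrability of F
  have hFint : Integrable (fun a : (Fin M → 𝒲) × 𝒳 => F a.1 a.2) (ν.prod P_X) := by
    refine Integrable.mono' (integrable_const 1) hFm.aestronglyMeasurable ?_
    exact ae_of_all _ fun a => by
      rw [Real.norm_eq_abs, abs_le]; exact ⟨by linarith [hF0 a.1 a.2], hF1 a.1 a.2⟩
  have keyB : ∫ c, (∫ x, F c x ∂P_X) ∂ν = ∫ x, (∫ c, F c x ∂ν) ∂P_X :=
    integral_integral_swap hFint
  have hWint : Integrable (fun a : ℝ × 𝒳 => (μ {r | q a.2 r > a.1}).toReal ^ M)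
      ((volume.restrict (Set.Ioo (0:ℝ) 1)).prod P_X) := by
    refine Integrable.mono' (integrable_const 1) hWm.aestronglyMeasurable ?_
    exact ae_of_all _ fun a => by
      rw [Real.norm_eq_abs, abs_le]; exact ⟨by linarith [hW0 a.1 a.2], hW1 a.1 a.2⟩
  have keyC : ∫ t in Set.Ioo (0:ℝ) 1, (∫ x, (μ {r | q x r > t}).toReal ^ M ∂P_X)
      = ∫ x, (∫ t in Set.Ioo (0:ℝ) 1, (μ {r | q x r > t}).toReal ^ M) ∂P_X :=
    integral_integral_swap hWint
  have hHint : Integrable (fun c => ∫ x, F c x ∂P_X) ν := hFint.integral_prod_left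
  obtain ⟨c, hc⟩ := exists_le_integral hHint
  refine ⟨c, fun x => argminFin fun i => q x (c i), ?_, ?_⟩
  · exact measurable_argminFin fun i =>
      hqm.comp (measurable_id.prodMk measurable_const)
  · have hpt : ∀ x : 𝒳, q x (c (argminFin fun i => q x (c i))) = F c x := by
      intro x
      refine le_antisymm ?_ (Finset.inf'_le _ (Finset.mem_univ _))
      exact Finset.le_inf' hne _ fun i _ => argminFin_le (fun i => q x (c i)) i
    calc ∫ x, q x (c (argminFin fun i => q x (c i))) ∂P_X
        = ∫ x, F c x ∂P_X := integral_congr_ae (ae_of_all _ hpt)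
      _ ≤ ∫ c', (∫ x, F c' x ∂P_X) ∂ν := hc
      _ = ∫ x, (∫ c', F c' x ∂ν) ∂P_X := keyB
      _ = ∫ x, (∫ t in Set.Ioo (0:ℝ) 1, (μ {r | q x r > t}).toReal ^ M) ∂P_X :=
          integral_congr_ae (ae_of_all _ keyA)
      _ = ∫ t in Set.Ioo (0:ℝ) 1, ∫ x, (μ {r | q x r > t}).toReal ^ M ∂P_X := keyC.symm

/-- random-coding achievability bound with two reconstructions, Lemma 5 of the
paper: for every probability measure `P_{ZY}` on `𝒵 × 𝒴` there exist a measurable encoder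
`f : 𝒳 → {1,…,M}` and decoders `g_s : {1,…,M} → 𝒵`, `g_x : {1,…,M} → 𝒴` with
`∫ π(x, g_s(f(x)), g_x(f(x))) dP_X ≤ ∫₀¹ ∫ (P_{ZY}{(z,y) : π(x,z,y) > t})^M dP_X dt`. -/
theorem stmt_6 {𝒳 𝒮 𝒵 𝒴 : Type*} [MeasurableSpace 𝒳] [MeasurableSpace 𝒮] [MeasurableSpace 𝒵]
    [MeasurableSpace 𝒴]
    (P_X : Measure 𝒳) [IsProbabilityMeasure P_X]
    (κ : Kernel 𝒳 𝒮) [IsMarkovKernel κ]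
    (ds : 𝒮 × 𝒵 → ℝ) (hds : Measurable ds) (dx : 𝒳 × 𝒴 → ℝ) (hdx : Measurable dx)
    (Ds Dx : ℝ) (M : ℕ) (hM : 1 ≤ M)
    (P_ZY : Measure (𝒵 × 𝒴)) [IsProbabilityMeasure P_ZY] :
    ∃ f : 𝒳 → Fin M, ∃ gs : Fin M → 𝒵, ∃ gx : Fin M → 𝒴, Measurable f ∧
      ∫ x, piXZY κ ds dx Ds Dx x (gs (f x)) (gx (f x)) ∂P_X
        ≤ ∫ t in Set.Ioo (0 : ℝ) 1,
            ∫ x, (P_ZY {p | piXZY κ ds dx Ds Dx x p.1 p.2 > t}).toReal ^ M ∂P_X := by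
  obtain ⟨c, f, hf, hle⟩ := stmt6_aux P_X P_ZY M hM
    (fun x r => piXZY κ ds dx Ds Dx x r.1 r.2)
    (measurable_piXZY κ hds hdx Ds Dx)
    (fun x r => piXZY_nonneg κ ds dx Ds Dx x r.1 r.2)
    (fun x r => piXZY_le_one κ ds dx Ds Dx x r.1 r.2)
  exact ⟨f, fun i => (c i).1, fun i => (c i).2, hf, hle⟩
end

section
/- Let (Ω, ℱ, P) be a probability space, m ⊆ ℱ a sub-σ-algebra, H and V bounded m-measurable real random variables, λ ∈ ℝ, and W : Ω → ℝ a random variable independent of m with E[W] = 0, E[W³] = 0, and E[W⁴] < ∞. Set σ_w² := E[W²] and σ_{w²}² := Var[W²]. Then Var[H + λ·(V+W)²] = Var[H + λ·(V² + σ_w²)] + λ²·(4·σ_w²·E[V²] + σ_{w²}²). -/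
open MeasureTheory ProbabilityTheory

lemma aux_mul_indep {Ω : Type*} [mΩ : MeasurableSpace Ω] (P : Measure Ω) [IsProbabilityMeasure P]
    (m : MeasurableSpace Ω)
    (W : Ω → ℝ)
    (hindep : Indep (MeasurableSpace.comap W inferInstance) m P)
    (f : Ω → ℝ) (hf : StronglyMeasurable[m] f) (hfi : Integrable f P)
    (g : ℝ → ℝ) (hg : Measurable g) (hgi : Integrable (fun ω => g (W ω)) P) :
    ∫ ω, f ω * g (W ω) ∂P = (∫ ω, f ω ∂P) * ∫ ω, g (W ω) ∂P := by
  have hfind : IndepFun f (fun ω => g (W ω)) P := by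
    rw [IndepFun_iff_Indep]
    have h1 := indep_of_indep_of_le_left hindep.symm (measurable_iff_comap_le.mp hf.measurable)
    refine indep_of_indep_of_le_right h1 ?_
    rw [show (fun ω => g (W ω)) = g ∘ W from rfl, ← MeasurableSpace.comap_comp]
    exact MeasurableSpace.comap_mono (measurable_iff_comap_le.mp hg)
  exact ProbabilityTheory.IndepFun.integral_fun_mul_eq_mul_integral hfind hfi.1 hgi.1

/-- law-of-total-variance decomposition under the source model: for bounded
`m`-measurable `H, V`, `λ ∈ ℝ` and `W` independent of `m` with `E[W] = 0`, `E[W³] = 0`,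
`E[W⁴] < ∞`, `σ_w² := E[W²]`,
`Var[H + λ(V+W)²] = Var[H + λ(V² + σ_w²)] + λ²(4σ_w²E[V²] + Var[W²])`. -/
theorem stmt_16 {Ω : Type*} (m : MeasurableSpace Ω) [mΩ : MeasurableSpace Ω] (P : Measure Ω) [IsProbabilityMeasure P]
    (hm : m ≤ mΩ)
    (H V : Ω → ℝ) (hH : StronglyMeasurable[m] H) (hV : StronglyMeasurable[m] V)
    (hHb : ∃ C : ℝ, ∀ ω, |H ω| ≤ C) (hVb : ∃ C : ℝ, ∀ ω, |V ω| ≤ C)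
    (lam : ℝ)
    (W : Ω → ℝ) (hWmeas : Measurable W)
    (hindep : Indep (MeasurableSpace.comap W inferInstance) m P)
    (hW1 : ∫ ω, W ω ∂P = 0) (hW3 : ∫ ω, (W ω) ^ 3 ∂P = 0)
    (hW4 : Integrable (fun ω => (W ω) ^ 4) P)
    (σw2 : ℝ) (hσ : σw2 = ∫ ω, (W ω) ^ 2 ∂P) :
    variance (fun ω => H ω + lam * (V ω + W ω) ^ 2) P
      = variance (fun ω => H ω + lam * ((V ω) ^ 2 + σw2)) P
        + lam ^ 2 * (4 * σw2 * (∫ ω, (V ω) ^ 2 ∂P) + variance (fun ω => (W ω) ^ 2) P) := by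
  letI : MeasurableSpace Ω := mΩ
  have hWM : Measurable[mΩ] W := hWmeas
  obtain ⟨CH0, hCH0⟩ := hHb
  obtain ⟨CV0, hCV0⟩ := hVb
  -- nonnegative bounds
  have hCH : ∀ ω, |H ω| ≤ |CH0| := fun ω => (hCH0 ω).trans (le_abs_self _)
  have hCV : ∀ ω, |V ω| ≤ |CV0| := fun ω => (hCV0 ω).trans (le_abs_self _)
  set CH := |CH0| with hCHdef
  set CV := |CV0| with hCVdef
  have hCHnn : 0 ≤ CH := abs_nonneg _
  have hCVnn : 0 ≤ CV := abs_nonneg _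
  -- measurability
  have hHM : Measurable[mΩ] H := (hH.mono hm).measurable
  have hVM : Measurable[mΩ] V := (hV.mono hm).measurable
  -- the m-measurable part A = H + lam * V^2
  have hAsm : StronglyMeasurable[m] (fun ω => H ω + lam * (V ω) ^ 2) :=
    hH.add (stronglyMeasurable_const.mul (hV.pow 2))
  have hAM : Measurable[mΩ] (fun ω => H ω + lam * (V ω) ^ 2) :=
    hHM.add (measurable_const.mul (hVM.pow_const 2))
  set CA := CH + |lam| * CV ^ 2 with hCAdef
  have hCAnn : 0 ≤ CA := by positivity
  have hCA : ∀ ω, |H ω + lam * (V ω) ^ 2| ≤ CA := by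
    intro ω
    calc |H ω + lam * (V ω) ^ 2| ≤ |H ω| + |lam * (V ω) ^ 2| := abs_add_le _ _
      _ ≤ CH + |lam| * CV ^ 2 := by
          refine add_le_add (hCH ω) ?_
          rw [abs_mul, abs_pow]
          exact mul_le_mul_of_nonneg_left (pow_le_pow_left₀ (abs_nonneg _) (hCV ω) 2) (abs_nonneg _)
  -- integrability of bounded functions
  have ibdd : ∀ (f : Ω → ℝ) (C : ℝ), AEStronglyMeasurable f P → (∀ ω, |f ω| ≤ C) →
      Integrable f P := by
    intro f C hmeas hb
    exact Integrable.mono' (integrable_const C) hmeas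
      (Filter.Eventually.of_forall fun ω => by simpa using hb ω)
  have ibmul : ∀ (f : Ω → ℝ) (C : ℝ), AEStronglyMeasurable f P → (∀ ω, |f ω| ≤ C) →
      ∀ (g : Ω → ℝ), Integrable g P → Integrable (fun ω => f ω * g ω) P := by
    intro f C hmeas hb g hg
    refine Integrable.mono' (hg.abs.const_mul C) (hmeas.mul hg.1)
      (Filter.Eventually.of_forall fun ω => ?_)
    calc ‖f ω * g ω‖ = |f ω| * |g ω| := abs_mul _ _
      _ ≤ C * |g ω| := mul_le_mul_of_nonneg_right (hb ω) (abs_nonneg _)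
  -- integrability of powers of W
  have hWb : ∀ (k : ℕ), k ≤ 4 → ∀ ω : Ω, |W ω| ^ k ≤ 1 + (W ω) ^ 4 := by
    intro k hk ω
    rcases le_total (|W ω|) 1 with h | h
    · calc |W ω| ^ k ≤ 1 ^ k := pow_le_pow_left₀ (abs_nonneg _) h k
        _ = 1 := one_pow k
        _ ≤ 1 + (W ω) ^ 4 := le_add_of_nonneg_right (by positivity)
    · calc |W ω| ^ k ≤ |W ω| ^ 4 := pow_le_pow_right₀ h hk
        _ = (W ω) ^ 4 := by rw [← abs_pow, abs_of_nonneg (by positivity)]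
        _ ≤ 1 + (W ω) ^ 4 := le_add_of_nonneg_left zero_le_one
  have iWk : ∀ (k : ℕ), k ≤ 4 → Integrable (fun ω => (W ω) ^ k) P := by
    intro k hk
    refine Integrable.mono' ((integrable_const 1).add hW4)
      ((hWM.pow_const k).aestronglyMeasurable (μ := P))
      (Filter.Eventually.of_forall fun ω => ?_)
    calc ‖(W ω) ^ k‖ = |W ω| ^ k := by rw [Real.norm_eq_abs, abs_pow]
      _ ≤ 1 + (W ω) ^ 4 := hWb k hk ω
  have iW1 : Integrable W P := by simpa using iWk 1 (by norm_num)
  have iW2 : Integrable (fun ω => (W ω) ^ 2) P := iWk 2 (by norm_num)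
  have iW3 : Integrable (fun ω => (W ω) ^ 3) P := iWk 3 (by norm_num)
  -- integrability of the various products
  have iA : Integrable (fun ω => H ω + lam * (V ω) ^ 2) P :=
    ibdd _ CA (hAM.aestronglyMeasurable (μ := P)) hCA
  have iA2 : Integrable (fun ω => (H ω + lam * (V ω) ^ 2) ^ 2) P := by
    refine ibdd _ (CA ^ 2) ((hAM.pow_const 2).aestronglyMeasurable (μ := P)) fun ω => ?_
    rw [abs_pow]
    exact pow_le_pow_left₀ (abs_nonneg _) (hCA ω) 2
  have iVW : Integrable (fun ω => V ω * W ω) P :=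
    ibmul V CV (hVM.aestronglyMeasurable (μ := P)) hCV W iW1
  have iV2W2 : Integrable (fun ω => (V ω) ^ 2 * (W ω) ^ 2) P := by
    refine ibmul _ (CV ^ 2) ((hVM.pow_const 2).aestronglyMeasurable (μ := P)) (fun ω => ?_) _ iW2
    rw [abs_pow]
    exact pow_le_pow_left₀ (abs_nonneg _) (hCV ω) 2
  have iAVW : Integrable (fun ω => ((H ω + lam * (V ω) ^ 2) * V ω) * W ω) P := by
    refine ibmul _ (CA * CV) ((hAM.mul hVM).aestronglyMeasurable (μ := P)) (fun ω => ?_) _ iW1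
    rw [Pi.mul_apply, abs_mul]
    exact mul_le_mul (hCA ω) (hCV ω) (abs_nonneg _) hCAnn
  have iAW2 : Integrable (fun ω => (H ω + lam * (V ω) ^ 2) * (W ω) ^ 2) P :=
    ibmul _ CA (hAM.aestronglyMeasurable (μ := P)) hCA _ iW2
  have iVW3 : Integrable (fun ω => V ω * (W ω) ^ 3) P :=
    ibmul V CV (hVM.aestronglyMeasurable (μ := P)) hCV _ iW3
  -- independence product formulas
  have h1 : ∫ ω, V ω * W ω ∂P = 0 := by
    rw [aux_mul_indep P m W hindep V hV (ibdd V CV (hVM.aestronglyMeasurable (μ := P)) hCV)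
      (fun x => x) measurable_id (by simpa using iW1)]
    simp [hW1]
  have h2 : ∫ ω, (V ω) ^ 2 * (W ω) ^ 2 ∂P = (∫ ω, (V ω) ^ 2 ∂P) * σw2 := by
    rw [aux_mul_indep P m W hindep (fun ω => (V ω) ^ 2) (hV.pow 2)
      (ibdd _ (CV ^ 2) ((hVM.pow_const 2).aestronglyMeasurable (μ := P))
        (fun ω => by rw [abs_pow]; exact pow_le_pow_left₀ (abs_nonneg _) (hCV ω) 2))
      (fun x => x ^ 2) (measurable_id.pow_const 2) iW2, hσ]
  have h3 : ∫ ω, ((H ω + lam * (V ω) ^ 2) * V ω) * W ω ∂P = 0 := by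
    rw [aux_mul_indep P m W hindep (fun ω => (H ω + lam * (V ω) ^ 2) * V ω) (hAsm.mul hV)
      (ibdd _ (CA * CV) ((hAM.mul hVM).aestronglyMeasurable (μ := P))
        (fun ω => by rw [abs_mul]; exact mul_le_mul (hCA ω) (hCV ω) (abs_nonneg _) hCAnn))
      (fun x => x) measurable_id (by simpa using iW1)]
    simp [hW1]
  have h4 : ∫ ω, (H ω + lam * (V ω) ^ 2) * (W ω) ^ 2 ∂P
      = (∫ ω, (H ω + lam * (V ω) ^ 2) ∂P) * σw2 := by
    rw [aux_mul_indep P m W hindep (fun ω => H ω + lam * (V ω) ^ 2) hAsm iA (fun x => x ^ 2)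
      (measurable_id.pow_const 2) iW2, hσ]
  have h5 : ∫ ω, V ω * (W ω) ^ 3 ∂P = 0 := by
    rw [aux_mul_indep P m W hindep V hV (ibdd V CV (hVM.aestronglyMeasurable (μ := P)) hCV)
      (fun x => x ^ 3) (measurable_id.pow_const 3) iW3]
    simp [hW3]
  -- MemLp facts
  have mA : MemLp (fun ω => H ω + lam * (V ω) ^ 2) 2 P :=
    MemLp.of_bound (hAM.aestronglyMeasurable (μ := P)) CA
      (Filter.Eventually.of_forall fun ω => by simpa using hCA ω)
  have mVW : MemLp (fun ω => V ω * W ω) 2 P := by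
    rw [memLp_two_iff_integrable_sq iVW.1]
    simpa [mul_pow] using iV2W2
  have mW2 : MemLp (fun ω => (W ω) ^ 2) 2 P := by
    rw [memLp_two_iff_integrable_sq iW2.1]
    have : (fun ω => ((W ω) ^ 2) ^ 2) = fun ω => (W ω) ^ 4 := by
      funext ω; ring
    rw [this]; exact hW4
  have mX : MemLp (fun ω => ((H ω + lam * (V ω) ^ 2) + (2 * lam) * (V ω * W ω))
      + lam * (W ω) ^ 2) 2 P :=
    (mA.add (mVW.const_mul (2 * lam))).add (mW2.const_mul lam)
  have mA' : MemLp (fun ω => (H ω + lam * (V ω) ^ 2) + lam * σw2) 2 P :=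
    mA.add (memLp_const _)
  -- rewrite the three variance arguments
  have hfun1 : (fun ω => H ω + lam * (V ω + W ω) ^ 2)
      = (fun ω => ((H ω + lam * (V ω) ^ 2) + (2 * lam) * (V ω * W ω)) + lam * (W ω) ^ 2) := by
    funext ω; ring
  have hfun2 : (fun ω => H ω + lam * ((V ω) ^ 2 + σw2))
      = (fun ω => (H ω + lam * (V ω) ^ 2) + lam * σw2) := by
    funext ω; ring
  rw [hfun1, hfun2, variance_eq_sub mX, variance_eq_sub mA', variance_eq_sub mW2]
  simp only [Pi.pow_apply]
  -- compute the first moments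
  have i2VW : Integrable (fun ω => (2 * lam) * (V ω * W ω)) P := iVW.const_mul (2 * lam)
  have ilW2 : Integrable (fun ω => lam * (W ω) ^ 2) P := iW2.const_mul lam
  have iS1 : Integrable (fun ω => (H ω + lam * (V ω) ^ 2) + (2 * lam) * (V ω * W ω)) P :=
    iA.add i2VW
  have hEX : ∫ ω, (((H ω + lam * (V ω) ^ 2) + (2 * lam) * (V ω * W ω)) + lam * (W ω) ^ 2) ∂P
      = (∫ ω, (H ω + lam * (V ω) ^ 2) ∂P) + lam * σw2 := by
    rw [integral_add iS1 ilW2, integral_add iA i2VW, integral_const_mul, integral_const_mul, h1, hσ]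
    ring
  have hEA' : ∫ ω, ((H ω + lam * (V ω) ^ 2) + lam * σw2) ∂P
      = (∫ ω, (H ω + lam * (V ω) ^ 2) ∂P) + lam * σw2 := by
    rw [integral_add iA (integrable_const _), integral_const]
    simp
  -- compute the second moments
  have hEX2 : ∫ ω, (((H ω + lam * (V ω) ^ 2) + (2 * lam) * (V ω * W ω)) + lam * (W ω) ^ 2) ^ 2 ∂P
      = (∫ ω, (H ω + lam * (V ω) ^ 2) ^ 2 ∂P)
        + (4 * lam ^ 2) * ((∫ ω, (V ω) ^ 2 ∂P) * σw2) + lam ^ 2 * (∫ ω, (W ω) ^ 4 ∂P)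
        + (2 * lam) * ((∫ ω, (H ω + lam * (V ω) ^ 2) ∂P) * σw2) := by
    have hexp : (fun ω => (((H ω + lam * (V ω) ^ 2) + (2 * lam) * (V ω * W ω))
          + lam * (W ω) ^ 2) ^ 2)
        = fun ω => (((((H ω + lam * (V ω) ^ 2) ^ 2
            + (4 * lam ^ 2) * ((V ω) ^ 2 * (W ω) ^ 2))
            + lam ^ 2 * (W ω) ^ 4)
            + (4 * lam) * (((H ω + lam * (V ω) ^ 2) * V ω) * W ω))
            + ((2 * lam) * ((H ω + lam * (V ω) ^ 2) * (W ω) ^ 2)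
              + (4 * lam ^ 2) * (V ω * (W ω) ^ 3))) := by
      funext ω; ring
    have j1 : Integrable (fun ω => (4 * lam ^ 2) * ((V ω) ^ 2 * (W ω) ^ 2)) P :=
      iV2W2.const_mul _
    have j2 : Integrable (fun ω => lam ^ 2 * (W ω) ^ 4) P := hW4.const_mul _
    have j3 : Integrable (fun ω => (4 * lam) * (((H ω + lam * (V ω) ^ 2) * V ω) * W ω)) P :=
      iAVW.const_mul _
    have j4 : Integrable (fun ω => (2 * lam) * ((H ω + lam * (V ω) ^ 2) * (W ω) ^ 2)) P :=
      iAW2.const_mul _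
    have j5 : Integrable (fun ω => (4 * lam ^ 2) * (V ω * (W ω) ^ 3)) P := iVW3.const_mul _
    have k1 : Integrable (fun ω => (H ω + lam * (V ω) ^ 2) ^ 2
        + (4 * lam ^ 2) * ((V ω) ^ 2 * (W ω) ^ 2)) P := iA2.add j1
    have k2 : Integrable (fun ω => ((H ω + lam * (V ω) ^ 2) ^ 2
        + (4 * lam ^ 2) * ((V ω) ^ 2 * (W ω) ^ 2)) + lam ^ 2 * (W ω) ^ 4) P := k1.add j2
    have k3 : Integrable (fun ω => (((H ω + lam * (V ω) ^ 2) ^ 2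
        + (4 * lam ^ 2) * ((V ω) ^ 2 * (W ω) ^ 2)) + lam ^ 2 * (W ω) ^ 4)
        + (4 * lam) * (((H ω + lam * (V ω) ^ 2) * V ω) * W ω)) P := k2.add j3
    have k4 : Integrable (fun ω => (2 * lam) * ((H ω + lam * (V ω) ^ 2) * (W ω) ^ 2)
        + (4 * lam ^ 2) * (V ω * (W ω) ^ 3)) P := j4.add j5
    rw [hexp]
    rw [integral_add k3 k4, integral_add k2 j3, integral_add k1 j2, integral_add iA2 j1,
      integral_add j4 j5,
      integral_const_mul, integral_const_mul, integral_const_mul, integral_const_mul,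
      integral_const_mul, h2, h3, h4, h5]
    ring
  have hEA'2 : ∫ ω, ((H ω + lam * (V ω) ^ 2) + lam * σw2) ^ 2 ∂P
      = (∫ ω, (H ω + lam * (V ω) ^ 2) ^ 2 ∂P)
        + (2 * (lam * σw2)) * (∫ ω, (H ω + lam * (V ω) ^ 2) ∂P) + (lam * σw2) ^ 2 := by
    have hexp : (fun ω => ((H ω + lam * (V ω) ^ 2) + lam * σw2) ^ 2)
        = fun ω => ((H ω + lam * (V ω) ^ 2) ^ 2
            + (2 * (lam * σw2)) * (H ω + lam * (V ω) ^ 2)) + (lam * σw2) ^ 2 := by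
      funext ω; ring
    have j6 : Integrable (fun ω => (2 * (lam * σw2)) * (H ω + lam * (V ω) ^ 2)) P :=
      iA.const_mul _
    have k6 : Integrable (fun ω => (H ω + lam * (V ω) ^ 2) ^ 2
        + (2 * (lam * σw2)) * (H ω + lam * (V ω) ^ 2)) P := iA2.add j6
    rw [hexp, integral_add k6 (integrable_const _),
      integral_add iA2 j6, integral_const_mul, integral_const]
    simp
  have hEW4 : ∫ ω, ((W ω) ^ 2) ^ 2 ∂P = ∫ ω, (W ω) ^ 4 ∂P := by
    congr 1; funext ω; ring
  rw [hEX, hEX2, hEA', hEA'2, hEW4, ← hσ]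
  ring
end
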